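/- arXiv:2009.04670 — 5 statements merged into one kernel-verified Lean document; each statement's English description precedes it below -/
import Mathlib

section
/- Let $n \ge 1$ and let $p_1,\dots,p_n$ and $q_1,\dots,q_n$ be elements of a commutative ring. Then the determinant of the $n\times n$ matrix with $(j,\ell)$ entry $p_{\min(j,\ell)}\, q_{\max(j,\ell)}$ equals $p_1 q_n \prod_{j=1}^{n-1} (p_{j+1} q_j - p_j q_{j+1})$. -/
/-!
The last row of `minMaxMatrix p q (n + 1)` is `q n` times the row `(p l)_l`. Once it is replaced
by that row, subtracting `q n` times it from the row above leaves the single entry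
`p n * q (n + 1) - p (n + 1) * q n` in the last column, and expanding along that row gives the
same kind of matrix one size smaller, so no division by the `q j` is ever needed.
-/

open Matrix Finset

section

variable {R : Type*} [CommRing R]

def minMaxMatrix (p q : ℕ → R) (n : ℕ) : Matrix (Fin n) (Fin n) R :=
  of fun j l => p (min (j : ℕ) l) * q (max (j : ℕ) l)

namespace minMaxMatrix

variable (p q : ℕ → R)

theorem det_eq_mul_det_updateRow_last (n : ℕ) :
    det (minMaxMatrix p q (n + 1)) =
      q n * det ((minMaxMatrix p q (n + 1)).updateRow (Fin.last n) fun l => p l) := by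
  rw [← det_updateRow_smul]
  congr
  ext j l
  refine Fin.lastCases ?_ (fun j => ?_) j
  · have hl : (l : ℕ) ≤ n := Fin.is_le l
    simp [minMaxMatrix, max_eq_left hl, min_eq_right hl, mul_comm]
  · rw [updateRow_ne (Fin.castSucc_lt_last j).ne]

theorem det_updateRow_last_succ (n : ℕ) :
    det ((minMaxMatrix p q (n + 2)).updateRow (Fin.last (n + 1)) fun l => p l) =
      (p (n + 1) * q n - p n * q (n + 1)) *
        det ((minMaxMatrix p q (n + 1)).updateRow (Fin.last n) fun l => p l) := by
  set A := (minMaxMatrix p q (n + 2)).updateRow (Fin.last (n + 1)) fun l => p l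
  set k : Fin (n + 2) := (Fin.last n).castSucc
  have hk : k ≠ Fin.last (n + 1) := (Fin.castSucc_lt_last _).ne
  have hrow : A k + (-q n) • A (Fin.last (n + 1)) =
      (p n * q (n + 1) - p (n + 1) * q n) • Pi.single (Fin.last (n + 1)) 1 := by
    ext l
    refine Fin.lastCases ?_ (fun l => ?_) l
    · simp [A, k, minMaxMatrix, sub_eq_add_neg, mul_comm]
    · have hl : (l : ℕ) ≤ n := Fin.is_le l
      simp [A, k, minMaxMatrix, max_eq_left hl, min_eq_right hl, hk, mul_comm]
  have hminor : A.submatrix k.succAbove (Fin.last (n + 1)).succAbove =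
      (minMaxMatrix p q (n + 1)).updateRow (Fin.last n) fun l => p l := by
    ext j l
    refine Fin.lastCases ?_ (fun j => ?_) j
    · simp [A, k]
    · simp [A, k, minMaxMatrix]
  rw [← det_updateRow_add_smul_self A hk (-q n), hrow, det_updateRow_smul, ← adjugate_apply,
    adjugate_fin_succ_eq_det_submatrix, hminor]
  have hsign : (-1 : R) ^ ((k : ℕ) + (Fin.last (n + 1) : ℕ)) = -1 := by simp [k]
  rw [hsign]
  ring

theorem det_updateRow_last (n : ℕ) :
    det ((minMaxMatrix p q (n + 1)).updateRow (Fin.last n) fun l => p l) =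
      p 0 * ∏ j ∈ range n, (p (j + 1) * q j - p j * q (j + 1)) := by
  induction n with
  | zero => simp
  | succ n ih => rw [det_updateRow_last_succ, ih, prod_range_succ]; ring

theorem det_succ (n : ℕ) :
    det (minMaxMatrix p q (n + 1)) =
      p 0 * q n * ∏ j ∈ range n, (p (j + 1) * q j - p j * q (j + 1)) := by
  rw [det_eq_mul_det_updateRow_last, det_updateRow_last]; ring

end minMaxMatrix

end

/-- For `p, q` (1-based) in a commutative ring, the determinant of the
`n × n` matrix with `(j, ℓ)` entry `p (min j ℓ) * q (max j ℓ)` equals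
`p 1 * q n * ∏_{j=1}^{n-1} (p (j+1) * q j - p j * q (j+1))`. -/
theorem det_min_max_kernel {R : Type*} [CommRing R] (n : ℕ) (hn : 1 ≤ n)
    (p q : ℕ → R) :
    Matrix.det (Matrix.of fun j ℓ : Fin n =>
        p (min (j : ℕ) (ℓ : ℕ) + 1) * q (max (j : ℕ) (ℓ : ℕ) + 1)) =
      p 1 * q n * ∏ j ∈ Finset.range (n - 1),
        (p (j + 2) * q (j + 1) - p (j + 1) * q (j + 2)) := by
  obtain ⟨m, rfl⟩ : ∃ m, n = m + 1 := ⟨n - 1, by omega⟩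
  exact minMaxMatrix.det_succ (fun i => p (i + 1)) (fun i => q (i + 1)) m
end

section
/- Let $a_j, b_j, c_j, d_j \in \mathbb{C}$ for $1 \le j \le k$, and suppose that $\operatorname{Im}(c_j/d_j) > 0$ for all $j$. Let $q$ be a standard Cauchy random variable (density $1/(\pi(1+x^2))$ on $\mathbb{R}$). Then $E \prod_{j=1}^k \frac{a_j + q b_j}{c_j + q d_j} = \prod_{j=1}^k \frac{a_j + i b_j}{c_j + i d_j}$, i.e. $\int_{-\infty}^{\infty} \frac{1}{\pi(1+x^2)} \prod_{j=1}^k \frac{a_j + x b_j}{c_j + x d_j}\, dx = \prod_{j=1}^k \frac{a_j + i b_j}{c_j + i d_j}$. -/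
/-!
Under the Cayley map `x ↦ (1 + x i)/(1 - x i) = exp (2 i arctan x)` the real line goes onto the
unit circle minus `-1`, and the Cauchy density `(π (1 + x²))⁻¹ dx` goes to the normalised arc
length `dθ / 2π`. Writing each factor `(a + x b)/(c + x d)` homogeneously in the circle variable
`w` gives a function that is holomorphic on the closed unit disc as soon as `Im (c / d) > 0`, so
the Cauchy average is a circle average and the mean value property evaluates it at `w = 0`,
which corresponds to `x = i`.
-/

open scoped Real
open MeasureTheory Complex

theorem Real.range_two_mul_arctan : Set.range (fun x ↦ 2 * Real.arctan x) = Set.Ioo (-π) π := by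
  rw [Set.range_comp' (2 * ·) Real.arctan, Real.range_arctan, Set.image_mul_left_Ioo two_pos]
  ring_nf

theorem integral_comp_two_mul_arctan {E : Type*} [NormedAddCommGroup E] [NormedSpace ℝ E]
    (g : ℝ → E) :
    ∫ x : ℝ, (2 / (1 + x ^ 2)) • g (2 * Real.arctan x) = ∫ θ in -π..π, g θ := by
  have hderiv (x : ℝ) : HasDerivAt (fun x ↦ 2 * Real.arctan x) (2 / (1 + x ^ 2)) x := by
    simpa only [mul_one_div] using (Real.hasDerivAt_arctan x).const_mul 2
  have hinj : Function.Injective (fun x ↦ 2 * Real.arctan x) := fun x y hxy ↦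
    Real.arctan_injective (by simpa using hxy)
  rw [intervalIntegral.integral_of_le (by linarith [Real.pi_pos]), integral_Ioc_eq_integral_Ioo,
    ← Real.range_two_mul_arctan, ← Set.image_univ,
    integral_image_eq_integral_abs_deriv_smul MeasurableSet.univ
      (fun x _ ↦ (hderiv x).hasDerivWithinAt) hinj.injOn, Measure.restrict_univ]
  refine integral_congr_ae (.of_forall fun x ↦ ?_)
  simp only [abs_of_pos (by positivity : 0 < 2 / (1 + x ^ 2))]

theorem Complex.one_sub_ofReal_mul_I_ne_zero (x : ℝ) : 1 - x * I ≠ 0 := fun h ↦ by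
  simpa using congrArg re h

theorem Complex.exp_two_mul_arctan_mul_I (x : ℝ) :
    exp (2 * Real.arctan x * I) = (1 + x * I) / (1 - x * I) := by
  have hsq : (√(1 + x ^ 2) : ℂ) ^ 2 = (1 - x * I) * (1 + x * I) := by
    rw [← ofReal_pow, Real.sq_sqrt (by positivity)]
    push_cast
    linear_combination (x : ℂ) ^ 2 * I_sq
  have hexp : exp (Real.arctan x * I) = (1 + x * I) / √(1 + x ^ 2) := by
    rw [exp_mul_I, ← ofReal_cos, ← ofReal_sin, Real.cos_arctan, Real.sin_arctan]
    push_cast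
    ring
  rw [mul_assoc, show (2 : ℂ) = (2 : ℕ) by norm_num, exp_nat_mul, hexp, div_pow, hsq, sq,
    mul_div_mul_right _ _ (by simpa using congrArg re ·)]

theorem DiffContOnCl.integral_cauchy_smul_comp_cayley {E : Type*} [NormedAddCommGroup E]
    [NormedSpace ℂ E] [CompleteSpace E] {G : ℂ → E} (hG : DiffContOnCl ℂ G (Metric.ball 0 1)) :
    ∫ x : ℝ, (π * (1 + x ^ 2))⁻¹ • G ((1 + x * I) / (1 - x * I)) = G 0 := by
  have hperiodic : ∫ θ in 0..2 * π, G (circleMap 0 1 θ) = ∫ θ in -π..π, G (circleMap 0 1 θ) := by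
    have := ((periodic_circleMap 0 1).comp G).intervalIntegral_add_eq 0 (-π)
    rwa [zero_add, show -π + 2 * π = π by ring] at this
  calc ∫ x : ℝ, (π * (1 + x ^ 2))⁻¹ • G ((1 + x * I) / (1 - x * I))
      = (2 * π)⁻¹ • ∫ x : ℝ, (2 / (1 + x ^ 2)) • G (circleMap 0 1 (2 * Real.arctan x)) := by
        rw [← integral_smul]
        congr 1 with x
        rw [smul_smul, circleMap_zero, ofReal_one, one_mul, ofReal_mul, ofReal_ofNat,
          exp_two_mul_arctan_mul_I]
        field_simp
    _ = Real.circleAverage G 0 1 := by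
        rw [integral_comp_two_mul_arctan (fun θ ↦ G (circleMap 0 1 θ)), Real.circleAverage_def,
          hperiodic]
    _ = G 0 := (by rwa [abs_one] : DiffContOnCl ℂ G (Metric.ball 0 |1|)).circleAverage

theorem Complex.norm_sub_I_lt_norm_add_I {z : ℂ} (hz : 0 < z.im) : ‖z - I‖ < ‖z + I‖ := by
  rw [← sq_lt_sq₀ (norm_nonneg _) (norm_nonneg _), Complex.sq_norm, Complex.sq_norm,
    normSq_apply, normSq_apply]
  simp only [sub_re, sub_im, add_re, add_im, I_re, I_im]
  nlinarith

/-- `(1 + w) (a + z b)` for `z = i (1 - w) / (1 + w)`, the inverse of the Cayley map. -/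
def cayleyForm (a b w : ℂ) : ℂ := a * (1 + w) + I * (1 - w) * b

theorem cayleyForm_zero (a b : ℂ) : cayleyForm a b 0 = a + I * b := by
  simp [cayleyForm]

theorem cayleyForm_cayley (a b : ℂ) (x : ℝ) :
    cayleyForm a b ((1 + x * I) / (1 - x * I)) = 2 / (1 - x * I) * (a + x * b) := by
  have := one_sub_ofReal_mul_I_ne_zero x
  simp only [cayleyForm]
  field_simp
  linear_combination (-2 * x * b : ℂ) * I_sq

theorem differentiable_cayleyForm (a b : ℂ) : Differentiable ℂ (cayleyForm a b) := by
  unfold cayleyForm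
  fun_prop

theorem cayleyForm_ne_zero {c d w : ℂ} (h : 0 < (c / d).im) (hw : ‖w‖ ≤ 1) :
    cayleyForm c d w ≠ 0 := by
  have hd : d ≠ 0 := by rintro rfl; simp at h
  have hform : cayleyForm c d w = d * ((c / d + I) + w * (c / d - I)) := by
    simp only [cayleyForm]
    field_simp
    ring
  have hlt : ‖w * (c / d - I)‖ < ‖c / d + I‖ := calc
    ‖w * (c / d - I)‖ ≤ ‖c / d - I‖ := by
      rw [norm_mul]; exact mul_le_of_le_one_left (norm_nonneg _) hw
    _ < ‖c / d + I‖ := norm_sub_I_lt_norm_add_I h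
  rw [hform]
  refine mul_ne_zero hd fun h0 ↦ hlt.ne ?_
  rw [eq_neg_of_add_eq_zero_right h0, norm_neg]

/-- Averaging a rational product against the standard Cauchy density:
if `Im (c j / d j) > 0` for all `j`, then
`∫_ℝ (π (1+x²))⁻¹ ∏_j (a j + x b j)/(c j + x d j) dx = ∏_j (a j + i b j)/(c j + i d j)`. -/
theorem cauchy_average_prod (k : ℕ) (a b c d : Fin k → ℂ)
    (h : ∀ j, 0 < (c j / d j).im) :
    ∫ x : ℝ,
        (1 / ((π : ℂ) * (1 + (x : ℂ) ^ 2))) *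
          ∏ j, (a j + (x : ℂ) * b j) / (c j + (x : ℂ) * d j) =
      ∏ j, (a j + Complex.I * b j) / (c j + Complex.I * d j) := by
  set G : ℂ → ℂ := fun w ↦ ∏ j, cayleyForm (a j) (b j) w / cayleyForm (c j) (d j) w
  have hG : DiffContOnCl ℂ G (Metric.ball 0 1) := by
    refine DifferentiableOn.diffContOnCl fun w hw ↦ ?_
    rw [closure_ball 0 one_ne_zero, mem_closedBall_zero_iff] at hw
    refine (DifferentiableAt.fun_finsetProd fun j _ ↦ ?_).differentiableWithinAt
    exact (differentiable_cayleyForm _ _ w).div (differentiable_cayleyForm _ _ w)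
      (cayleyForm_ne_zero (h j) hw)
  have hG_cayley (x : ℝ) :
      G ((1 + x * I) / (1 - x * I)) = ∏ j, (a j + x * b j) / (c j + x * d j) := by
    have : (2 : ℂ) / (1 - x * I) ≠ 0 := div_ne_zero two_ne_zero (one_sub_ofReal_mul_I_ne_zero x)
    simp only [G, cayleyForm_cayley, mul_div_mul_left _ _ this]
  have hG_zero : G 0 = ∏ j, (a j + I * b j) / (c j + I * d j) := by
    simp only [G, cayleyForm_zero]
  rw [← hG_zero, ← hG.integral_cauchy_smul_comp_cayley]
  refine integral_congr_ae (.of_forall fun x ↦ ?_)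
  simp only [hG_cayley, real_smul]
  push_cast
  ring
end

section
/- Fix $\alpha > 0$, $\sigma > 0$ and $n \ge 1$. Then the iterated integral $\int\cdots\int_{0 < s_1 < \cdots < s_{2n} \le \sigma} \frac{s_1^{\alpha} s_3^{\alpha} \cdots s_{2n-1}^{\alpha}}{s_2^{\alpha} s_4^{\alpha} \cdots s_{2n}^{\alpha}}\, ds_1 \cdots ds_{2n} = \frac{\sigma^{2n}\, \Gamma(\frac{\alpha+1}{2})}{4^n\, n!\, \Gamma(\frac{\alpha+1}{2} + n)}$. -/
/-!
Integrate over the largest variable last. For a fixed top value `y`, the remaining variables range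
over the open simplex below `y`, which differs from the half-open one by a null set, so by
induction the inner integral of `∏ sᵢ ^ εᵢ` is `y ^ Eₘ / (E₁ ⋯ Eₘ)` with `Eₖ = ∑_{i<k} (εᵢ + 1)`;
the outer integral `∫₀^σ y ^ (Eₘ + εₘ) dy` then contributes the factor `σ ^ Eₘ₊₁ / Eₘ₊₁`.
Working with lower Lebesgue integrals makes Tonelli available without integrability side
conditions. For the alternating exponents `±α` one has `E₂ⱼ = 2j` and `E₂ⱼ₊₁ = 2j + 1 + α`, so
`E₁ ⋯ E₂ₙ = ∏_{j<n} 4 (j + 1) ((α + 1)/2 + j) = 4ⁿ n! Γ((α + 1)/2 + n) / Γ((α + 1)/2)`.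
-/

open MeasureTheory Set

open scoped ENNReal

def orderedSimplex (m : ℕ) (I : Set ℝ) : Set (Fin m → ℝ) :=
  {t | StrictMono t ∧ ∀ i, t i ∈ I}

theorem measurableSet_orderedSimplex (m : ℕ) {I : Set ℝ} (hI : MeasurableSet I) :
    MeasurableSet (orderedSimplex m I) := by
  unfold orderedSimplex StrictMono
  measurability

theorem orderedSimplex_zero (I : Set ℝ) : orderedSimplex 0 I = univ :=
  eq_univ_of_forall fun t => ⟨Subsingleton.strictMono t, finZeroElim⟩

theorem Fin.strictMono_snoc_iff {α : Type*} [Preorder α] {m : ℕ} {s : Fin m → α} {y : α} :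
    StrictMono (Fin.snoc s y : Fin (m + 1) → α) ↔ StrictMono s ∧ ∀ i, s i < y := by
  refine ⟨fun h => ⟨fun i j hij => ?_, fun i => ?_⟩, fun ⟨hs, hy⟩ i j hij => ?_⟩
  · simpa using h (Fin.castSucc_lt_castSucc_iff.2 hij)
  · simpa using h (Fin.castSucc_lt_last i)
  · induction j using Fin.lastCases with
    | last =>
      induction i using Fin.lastCases with
      | last => exact absurd hij (lt_irrefl _)
      | cast i => simpa using hy i
    | cast j =>
      induction i using Fin.lastCases with
      | last => exact absurd hij (not_lt.2 (Fin.le_last _))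
      | cast i => simpa using hs (Fin.castSucc_lt_castSucc_iff.1 hij)

theorem Fin.snoc_mem_orderedSimplex_Ioc_iff {m : ℕ} {σ y : ℝ} {s : Fin m → ℝ} :
    Fin.snoc s y ∈ orderedSimplex (m + 1) (Ioc 0 σ) ↔
      y ∈ Ioc 0 σ ∧ s ∈ orderedSimplex m (Ioo 0 y) := by
  simp only [orderedSimplex, mem_ofPred_eq, Fin.strictMono_snoc_iff, Fin.forall_fin_succ',
    Fin.snoc_castSucc, Fin.snoc_last, mem_Ioc, mem_Ioo]
  constructor
  · rintro ⟨⟨hs, hsy⟩, hsσ, hy⟩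
    exact ⟨hy, hs, fun i => ⟨(hsσ i).1, hsy i⟩⟩
  · rintro ⟨hy, hs, hsy⟩
    exact ⟨⟨hs, fun i => (hsy i).2⟩, fun i => ⟨(hsy i).1, (hsy i).2.le.trans hy.2⟩, hy⟩

theorem orderedSimplex_ae_eq (m : ℕ) {I J : Set ℝ} (h : I =ᵐ[volume] J) :
    orderedSimplex m I =ᵐ[volume] orderedSimplex m J := by
  have : ∀ I : Set ℝ, orderedSimplex m I = {t | StrictMono t} ∩ ⋂ i, Function.eval i ⁻¹' I :=
    fun I => by ext; simp [orderedSimplex]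
  rw [this, this]
  exact (Filter.EventuallyEq.refl _ _).inter <| .iInter fun i =>
    (Measure.quasiMeasurePreserving_eval _ i).preimage_ae_eq h

theorem setLIntegral_orderedSimplex_succ (m : ℕ) (σ : ℝ) {f : (Fin (m + 1) → ℝ) → ℝ≥0∞}
    (hf : Measurable f) :
    ∫⁻ t in orderedSimplex (m + 1) (Ioc 0 σ), f t =
      ∫⁻ y in Ioc 0 σ, ∫⁻ s in orderedSimplex m (Ioo 0 y), f (Fin.snoc s y) := by
  let e := MeasurableEquiv.piFinSuccAbove (fun _ : Fin (m + 1) => ℝ) (Fin.last m)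
  have he : MeasurePreserving e.symm (volume.prod volume) volume :=
    (volume_preserving_piFinSuccAbove (fun _ : Fin (m + 1) => ℝ) (Fin.last m)).symm
  have he_apply (y : ℝ) (s : Fin m → ℝ) : e.symm (y, s) = Fin.snoc s y := by ext; simp [e]
  have hS := measurableSet_orderedSimplex (m + 1) (measurableSet_Ioc (a := (0 : ℝ)) (b := σ))
  have hF : Measurable fun p => (orderedSimplex (m + 1) (Ioc 0 σ)).indicator f (e.symm p) :=
    (hf.indicator hS).comp e.symm.measurable
  rw [← lintegral_indicator hS, ← he.lintegral_comp_emb e.symm.measurableEmbedding,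
    lintegral_prod _ hF.aemeasurable, ← lintegral_indicator measurableSet_Ioc]
  congr 1 with y
  by_cases hy : y ∈ Ioc 0 σ
  · rw [indicator_of_mem hy,
      ← lintegral_indicator (measurableSet_orderedSimplex m measurableSet_Ioo)]
    congr 1 with s
    rw [he_apply]
    by_cases hs : s ∈ orderedSimplex m (Ioo 0 y)
    · rw [indicator_of_mem hs, indicator_of_mem (Fin.snoc_mem_orderedSimplex_Ioc_iff.2 ⟨hy, hs⟩)]
    · rw [indicator_of_notMem hs,
        indicator_of_notMem fun h => hs (Fin.snoc_mem_orderedSimplex_Ioc_iff.1 h).2]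
  · simp [he_apply, Fin.snoc_mem_orderedSimplex_Ioc_iff, hy]

theorem lintegral_Ioc_rpow {b r : ℝ} (hb : 0 ≤ b) (hr : -1 < r) :
    ∫⁻ x in Ioc 0 b, ENNReal.ofReal (x ^ r) = ENNReal.ofReal (b ^ (r + 1) / (r + 1)) := by
  rw [← ofReal_integral_eq_lintegral_ofReal, ← intervalIntegral.integral_of_le hb,
    integral_rpow (Or.inl hr), Real.zero_rpow (by linarith), sub_zero]
  · exact (intervalIntegrable_iff_integrableOn_Ioc_of_le hb).1
      (intervalIntegral.intervalIntegrable_rpow' hr)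
  · filter_upwards [ae_restrict_mem measurableSet_Ioc] with x hx
    exact Real.rpow_nonneg hx.1.le r

def exponentSum (ε : ℕ → ℝ) (k : ℕ) : ℝ := ∑ i ∈ Finset.range k, (ε i + 1)

theorem exponentSum_succ (ε : ℕ → ℝ) (k : ℕ) :
    exponentSum ε (k + 1) = exponentSum ε k + ε k + 1 := by
  rw [exponentSum, Finset.sum_range_succ, ← exponentSum, add_assoc]

theorem setLIntegral_orderedSimplex_prod_rpow (ε : ℕ → ℝ) (m : ℕ)
    (hε : ∀ k < m, 0 < exponentSum ε (k + 1)) {σ : ℝ} (hσ : 0 < σ) :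
    ∫⁻ t in orderedSimplex m (Ioc 0 σ), ENNReal.ofReal (∏ i, t i ^ ε i) =
      ENNReal.ofReal (σ ^ exponentSum ε m / ∏ k ∈ Finset.range m, exponentSum ε (k + 1)) := by
  induction m generalizing σ with
  | zero => simp [orderedSimplex_zero, exponentSum, volume_pi]
  | succ m ih =>
    set P := ∏ k ∈ Finset.range m, exponentSum ε (k + 1) with hP_def
    have hP : 0 < P := Finset.prod_pos fun k hk => hε k (by have := Finset.mem_range.1 hk; omega)
    have hm := hε m m.lt_succ_self
    have inner : ∀ y ∈ Ioc 0 σ,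
        ∫⁻ s in orderedSimplex m (Ioo 0 y),
            ENNReal.ofReal (∏ i : Fin (m + 1), (Fin.snoc s y : Fin (m + 1) → ℝ) i ^ ε i) =
          ENNReal.ofReal P⁻¹ * ENNReal.ofReal (y ^ (exponentSum ε m + ε m)) := by
      intro y hy
      simp only [Fin.prod_univ_castSucc, Fin.snoc_castSucc, Fin.snoc_last, Fin.val_castSucc,
        Fin.val_last]
      rw [setLIntegral_congr (orderedSimplex_ae_eq m Ioo_ae_eq_Ioc)]
      simp_rw [ENNReal.ofReal_mul' (Real.rpow_nonneg hy.1.le _)]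
      rw [lintegral_mul_const _ (by fun_prop), ih (fun k hk => hε k (by omega)) hy.1,
        ← ENNReal.ofReal_mul (div_nonneg (Real.rpow_nonneg hy.1.le _) hP.le),
        ← ENNReal.ofReal_mul (inv_nonneg.2 hP.le), Real.rpow_add hy.1]
      ring_nf
    rw [setLIntegral_orderedSimplex_succ _ _ (by fun_prop),
      setLIntegral_congr_fun measurableSet_Ioc inner, lintegral_const_mul _ (by fun_prop),
      lintegral_Ioc_rpow hσ.le (by rw [exponentSum_succ] at hm; linarith),
      ← ENNReal.ofReal_mul (by positivity), ← exponentSum_succ, Finset.prod_range_succ, ← hP_def]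
    congr 1
    field_simp

theorem setIntegral_orderedSimplex_prod_rpow (ε : ℕ → ℝ) (m : ℕ)
    (hε : ∀ k < m, 0 < exponentSum ε (k + 1)) {σ : ℝ} (hσ : 0 < σ) :
    ∫ t in orderedSimplex m (Ioc 0 σ), ∏ i, t i ^ ε i =
      σ ^ exponentSum ε m / ∏ k ∈ Finset.range m, exponentSum ε (k + 1) := by
  have hP : 0 < ∏ k ∈ Finset.range m, exponentSum ε (k + 1) :=
    Finset.prod_pos fun k hk => hε k (Finset.mem_range.1 hk)
  have hnonneg : 0 ≤ᵐ[volume.restrict (orderedSimplex m (Ioc 0 σ))] fun t => ∏ i, t i ^ ε i := by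
    filter_upwards [ae_restrict_mem (measurableSet_orderedSimplex m measurableSet_Ioc)] with t ht
    exact Finset.prod_nonneg fun i _ => Real.rpow_nonneg (ht.2 i).1.le _
  rw [integral_eq_lintegral_of_nonneg_ae hnonneg (by fun_prop : Measurable _).aestronglyMeasurable,
    setLIntegral_orderedSimplex_prod_rpow ε m hε hσ, ENNReal.toReal_ofReal (by positivity)]

def alternatingExponent (α : ℝ) (k : ℕ) : ℝ := if Even k then α else -α

theorem exponentSum_alternatingExponent_two_mul (α : ℝ) (n : ℕ) :
    exponentSum (alternatingExponent α) (2 * n) = 2 * n := by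
  induction n with
  | zero => simp [exponentSum]
  | succ n ih =>
    rw [show 2 * (n + 1) = 2 * n + 1 + 1 by ring, exponentSum_succ, exponentSum_succ, ih]
    simp only [alternatingExponent, even_two, Even.mul_right, ↓reduceIte, Nat.not_even_bit1,
      Nat.cast_add, Nat.cast_one]
    ring

theorem exponentSum_alternatingExponent_two_mul_add_one (α : ℝ) (n : ℕ) :
    exponentSum (alternatingExponent α) (2 * n + 1) = 2 * n + α + 1 := by
  simp [exponentSum_succ, exponentSum_alternatingExponent_two_mul, alternatingExponent]

theorem exponentSum_alternatingExponent_pos {α : ℝ} (hα : -1 < α) (k : ℕ) :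
    0 < exponentSum (alternatingExponent α) (k + 1) := by
  obtain ⟨j, hj | hj⟩ := Nat.even_or_odd' (k + 1)
  · rw [hj, exponentSum_alternatingExponent_two_mul]
    have : 1 ≤ j := by omega
    exact_mod_cast (by omega : 0 < 2 * j)
  · rw [hj, exponentSum_alternatingExponent_two_mul_add_one]
    have : (0 : ℝ) ≤ j := j.cast_nonneg
    linarith

theorem prod_exponentSum_alternatingExponent_mul_Gamma {α : ℝ} (hα : -1 < α) (n : ℕ) :
    (∏ k ∈ Finset.range (2 * n), exponentSum (alternatingExponent α) (k + 1)) *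
        Real.Gamma ((α + 1) / 2) =
      4 ^ n * n.factorial * Real.Gamma ((α + 1) / 2 + n) := by
  induction n with
  | zero => simp
  | succ n ih =>
    have hc : (α + 1) / 2 + n ≠ 0 := by
      have : (0 : ℝ) ≤ n := n.cast_nonneg
      exact (by linarith : 0 < (α + 1) / 2 + n).ne'
    have h2 := exponentSum_alternatingExponent_two_mul α (n + 1)
    rw [show 2 * (n + 1) = 2 * n + 1 + 1 by ring] at h2 ⊢
    rw [Finset.prod_range_succ, Finset.prod_range_succ, h2,
      exponentSum_alternatingExponent_two_mul_add_one, Nat.cast_succ, ← add_assoc,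
      Real.Gamma_add_one hc, Nat.factorial_succ]
    push_cast
    linear_combination (2 * n + α + 1) * (2 * (n + 1)) * ih

/-- Indices are zero-based: `s i` with `i` even is the paper's `s_{i+1}`, whose index is odd. -/
theorem bessel_simplex_integral_general (α σ : ℝ) (hα : 0 < α) (hσ : 0 < σ) (n : ℕ) :
    (∫ s in {t : Fin (2 * n) → ℝ | StrictMono t ∧ ∀ i, t i ∈ Set.Ioc 0 σ},
        ∏ i : Fin (2 * n), s i ^ (if Even (i : ℕ) then α else -α) ∂volume) =
      σ ^ (2 * n) * Real.Gamma ((α + 1) / 2) /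
        (4 ^ n * (Nat.factorial n) * Real.Gamma ((α + 1) / 2 + n)) := by
  have hα' : -1 < α := by linarith
  change ∫ s in orderedSimplex (2 * n) (Ioc 0 σ), ∏ i, s i ^ alternatingExponent α i = _
  rw [setIntegral_orderedSimplex_prod_rpow _ _
      (fun k _ => exponentSum_alternatingExponent_pos hα' k) hσ,
    exponentSum_alternatingExponent_two_mul, ← prod_exponentSum_alternatingExponent_mul_Gamma hα',
    show (2 : ℝ) * n = (2 * n : ℕ) by push_cast; ring, Real.rpow_natCast]
  have hΓ : Real.Gamma ((α + 1) / 2) ≠ 0 := (Real.Gamma_pos_of_pos (by linarith)).ne'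
  field_simp

/-- The ordered-simplex integral
`∫_{0<s₁<⋯<s_{2n}≤σ} (s₁ s₃ ⋯ s_{2n-1})^α / (s₂ s₄ ⋯ s_{2n})^α ds
  = σ^{2n} Γ((α+1)/2) / (4ⁿ n! Γ((α+1)/2 + n))`.
(Indices here are zero-based: `s i` with `i` even corresponds to an odd one-based index,
hence appears with exponent `α`; `i` odd appears with exponent `-α`.) -/
theorem bessel_simplex_integral (α σ : ℝ) (hα : 0 < α) (hσ : 0 < σ) (n : ℕ) (hn : 1 ≤ n) :
    (∫ s in {t : Fin (2 * n) → ℝ | StrictMono t ∧ ∀ i, t i ∈ Set.Ioc 0 σ},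
        ∏ i : Fin (2 * n), s i ^ (if Even (i : ℕ) then α else -α) ∂volume) =
      σ ^ (2 * n) * Real.Gamma ((α + 1) / 2) /
        (4 ^ n * (Nat.factorial n) * Real.Gamma ((α + 1) / 2 + n)) :=
  bessel_simplex_integral_general α σ hα hσ n
end

section
/- Let $G$ be a bounded interval, $k: G^2 \to \mathbb{R}$ measurable with $\iint_{G^2} |k(s,t)|^2\, ds\, dt < \infty$ and $\int_G |k(s,s)|\, ds < \infty$, and let $A$ be the integral operator on $L^2(G)$ with kernel $k$. Then for every $n \ge 1$, $\int_{G^n} \left|\det[k(t_i,t_j)]_{i,j=1}^n\right| dt_1 \cdots dt_n \le n! \left(\int_G |k(s,s)|\,ds + \|A\|_{HS}\right)^n$, where $\|A\|_{HS}$ is the Hilbert–Schmidt norm. -/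
/-!
Bound `|det [k(tᵢ,tⱼ)]|` by `∑_σ ∏ᵢ |k(tᵢ, t_{σ i})|`; it then suffices to show that each
permutation term integrates to at most `(D + H)ⁿ`, where `D = ∫ |k(s,s)|` and `H` is the
Hilbert–Schmidt norm of `|k|`. Integrate the variables out one at a time. If `σ x ≠ x`,
integrating out `t_x` merges the two factors containing `t_x` into one factor of an iterated
kernel of `|k|`, on a permutation of one variable fewer; a fixed point `x` splits off the diagonal
integral of its kernel. The diagonal integral of the `m`-fold iterate is `D` for `m = 1`, and at
most `Hᵐ` for `m ≥ 2` by Cauchy–Schwarz (`Tr Bᵐ ≤ ‖B‖_HSᵐ`).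
-/

open MeasureTheory Function ENNReal

theorem Matrix.abs_det_le_sum_prod_abs {ι R : Type*} [Fintype ι] [DecidableEq ι] [CommRing R]
    [LinearOrder R] [IsStrictOrderedRing R] (M : Matrix ι ι R) :
    |M.det| ≤ ∑ σ : Equiv.Perm ι, ∏ i, |M i (σ i)| := by
  rw [← Matrix.det_transpose, Matrix.det_apply]
  refine (Finset.abs_sum_le_sum_abs _ _).trans (Finset.sum_le_sum fun σ _ => ?_)
  rcases Int.units_eq_one_or (Equiv.Perm.sign σ) with h | h <;>
    simp [h, Units.smul_def, Finset.abs_prod]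

theorem Matrix.ofReal_abs_det_le_sum_prod {ι : Type*} [Fintype ι] [DecidableEq ι]
    (M : Matrix ι ι ℝ) :
    ENNReal.ofReal |M.det| ≤ ∑ σ : Equiv.Perm ι, ∏ i, ENNReal.ofReal |M i (σ i)| := by
  calc ENNReal.ofReal |M.det| ≤ ENNReal.ofReal (∑ σ : Equiv.Perm ι, ∏ i, |M i (σ i)|) :=
        ENNReal.ofReal_le_ofReal M.abs_det_le_sum_prod_abs
    _ = _ := by
        rw [ENNReal.ofReal_sum_of_nonneg fun _ _ => Finset.prod_nonneg fun _ _ => abs_nonneg _]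
        simp_rw [ENNReal.ofReal_prod_of_nonneg fun _ _ => abs_nonneg _]

namespace DetIntegralBound

open Equiv Equiv.Perm

variable {α : Type*} [MeasurableSpace α]

theorem lintegral_mul_sq_le (μ : Measure α) {f g : α → ℝ≥0∞}
    (hf : AEMeasurable f μ) (hg : AEMeasurable g μ) :
    (∫⁻ x, f x * g x ∂μ) ^ 2 ≤ (∫⁻ x, f x ^ 2 ∂μ) * ∫⁻ x, g x ^ 2 ∂μ := by
  have h := ENNReal.lintegral_mul_le_Lp_mul_Lq μ Real.HolderConjugate.two_two hf hg
  simp only [Pi.mul_apply, ENNReal.rpow_two] at h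
  calc (∫⁻ x, f x * g x ∂μ) ^ 2
      ≤ ((∫⁻ x, f x ^ 2 ∂μ) ^ (1 / 2 : ℝ) * (∫⁻ x, g x ^ 2 ∂μ) ^ (1 / 2 : ℝ)) ^ 2 := by gcongr
    _ = (∫⁻ x, f x ^ 2 ∂μ) * ∫⁻ x, g x ^ 2 ∂μ := by
      simp only [mul_pow, one_div, ← ENNReal.rpow_two, ENNReal.rpow_inv_rpow two_ne_zero]

theorem lintegral_pi_fin_succ {ν : Measure α} [SigmaFinite ν] {n : ℕ}
    {f : (Fin (n + 1) → α) → ℝ≥0∞} (hf : Measurable f) :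
    ∫⁻ t, f t ∂Measure.pi (fun _ => ν)
      = ∫⁻ u, ∫⁻ a, f (Fin.cons a u) ∂ν ∂Measure.pi (fun _ => ν) := by
  rw [← (measurePreserving_piFinSuccAbove (fun _ : Fin (n + 1) => ν) 0).symm.lintegral_comp hf,
    lintegral_prod_symm (fun z => f ((MeasurableEquiv.piFinSuccAbove (fun _ => α) 0).symm z))
    (hf.comp (MeasurableEquiv.measurable _)).aemeasurable]
  simp only [MeasurableEquiv.piFinSuccAbove_symm_apply, Fin.insertNthEquiv,
    Fin.insertNth_zero', Equiv.coe_fn_mk]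

variable (ν : Measure α) (F : α → α → ℝ≥0∞)

noncomputable def hsNorm : ℝ≥0∞ := (∫⁻ a, ∫⁻ b, F a b ^ 2 ∂ν ∂ν) ^ (1 / 2 : ℝ)

/-- `kernelPow ν F m` is the kernel of the `(m + 1)`-st power of the integral operator with
kernel `F`. -/
noncomputable def kernelPow : ℕ → α → α → ℝ≥0∞
  | 0 => F
  | m + 1 => fun a b => ∫⁻ x, F a x * kernelPow m x b ∂ν

variable {ν F}

theorem hsNorm_sq : hsNorm ν F ^ 2 = ∫⁻ a, ∫⁻ b, F a b ^ 2 ∂ν ∂ν := by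
  rw [hsNorm, one_div, ← ENNReal.rpow_two, ENNReal.rpow_inv_rpow two_ne_zero]

theorem hsNorm_ofReal_abs [SFinite ν] {k : α → α → ℝ} (hk : Measurable (uncurry k))
    (hk2 : Integrable (fun p : α × α => k p.1 p.2 ^ 2) (ν.prod ν)) :
    hsNorm ν (fun a b => ENNReal.ofReal |k a b|)
      = ENNReal.ofReal √(∫ p, k p.1 p.2 ^ 2 ∂ν.prod ν) := by
  have hsq : ∀ a b, ENNReal.ofReal |k a b| ^ 2 = ENNReal.ofReal (k a b ^ 2) := fun a b => by
    rw [← ENNReal.ofReal_pow (abs_nonneg _), sq_abs]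
  rw [hsNorm, Real.sqrt_eq_rpow, ← ENNReal.ofReal_rpow_of_nonneg
      (integral_nonneg fun _ => sq_nonneg _) (by norm_num),
    ofReal_integral_eq_lintegral_ofReal hk2 (ae_of_all _ fun _ => sq_nonneg _),
    lintegral_prod _ (by fun_prop)]
  simp_rw [hsq]

section SFinite

variable [SFinite ν]

theorem measurable_kernelPow (hF : Measurable (uncurry F)) (m : ℕ) :
    Measurable (uncurry (kernelPow ν F m)) := by
  induction m with
  | zero => exact hF
  | succ m ih =>
    refine Measurable.lintegral_prod_right' (f := fun p : (α × α) × α =>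
      F p.1.1 p.2 * kernelPow ν F m p.2 p.1.2) ?_
    exact (hF.comp (measurable_fst.fst.prodMk measurable_snd)).mul
      (ih.comp (measurable_snd.prodMk measurable_fst.snd))

theorem lintegral_kernelPow_mul_kernelPow (hF : Measurable (uncurry F)) (m l : ℕ) (a b : α) :
    ∫⁻ x, kernelPow ν F m a x * kernelPow ν F l x b ∂ν = kernelPow ν F (m + l + 1) a b := by
  induction m generalizing a with
  | zero => rw [zero_add]; rfl
  | succ m ih =>
    have hKm := measurable_kernelPow (ν := ν) hF m
    have hKl := measurable_kernelPow (ν := ν) hF l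
    calc ∫⁻ x, (∫⁻ y, F a y * kernelPow ν F m y x ∂ν) * kernelPow ν F l x b ∂ν
        = ∫⁻ x, ∫⁻ y, F a y * (kernelPow ν F m y x * kernelPow ν F l x b) ∂ν ∂ν := by
          refine lintegral_congr fun x => ?_
          simp_rw [← mul_assoc]
          exact (lintegral_mul_const _ (hF.of_uncurry_left.mul hKm.of_uncurry_right)).symm
      _ = ∫⁻ y, F a y * ∫⁻ x, kernelPow ν F m y x * kernelPow ν F l x b ∂ν ∂ν := by
          rw [lintegral_lintegral_swap (by fun_prop)]
          refine lintegral_congr fun y => ?_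
          exact lintegral_const_mul _ (hKm.of_uncurry_left.mul hKl.of_uncurry_right)
      _ = kernelPow ν F (m + 1 + l + 1) a b := by
          simp_rw [ih, Nat.add_right_comm m 1 l]; rfl

theorem lintegral_lintegral_kernelPow_sq_le (hF : Measurable (uncurry F)) (m : ℕ) :
    ∫⁻ a, ∫⁻ b, kernelPow ν F m a b ^ 2 ∂ν ∂ν ≤ (∫⁻ a, ∫⁻ b, F a b ^ 2 ∂ν ∂ν) ^ (m + 1) := by
  induction m with
  | zero => simp [kernelPow]
  | succ m ih =>
    have hKm := measurable_kernelPow (ν := ν) hF m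
    calc ∫⁻ a, ∫⁻ b, kernelPow ν F (m + 1) a b ^ 2 ∂ν ∂ν
        ≤ ∫⁻ a, ∫⁻ b, (∫⁻ x, F a x ^ 2 ∂ν) * ∫⁻ x, kernelPow ν F m x b ^ 2 ∂ν ∂ν ∂ν :=
          lintegral_mono fun a => lintegral_mono fun b => lintegral_mul_sq_le ν
            hF.of_uncurry_left.aemeasurable hKm.of_uncurry_right.aemeasurable
      _ = (∫⁻ a, ∫⁻ x, F a x ^ 2 ∂ν ∂ν) * ∫⁻ b, ∫⁻ x, kernelPow ν F m x b ^ 2 ∂ν ∂ν :=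
          lintegral_lintegral_mul (by fun_prop) (by fun_prop)
      _ ≤ (∫⁻ a, ∫⁻ b, F a b ^ 2 ∂ν ∂ν) * (∫⁻ a, ∫⁻ b, F a b ^ 2 ∂ν ∂ν) ^ (m + 1) := by
          rw [lintegral_lintegral_swap (f := fun b x => kernelPow ν F m x b ^ 2) (by fun_prop)]
          gcongr
      _ = (∫⁻ a, ∫⁻ b, F a b ^ 2 ∂ν ∂ν) ^ (m + 1 + 1) := (pow_succ' _ _).symm

theorem lintegral_kernelPow_succ_diag_sq_le (hF : Measurable (uncurry F)) (m : ℕ) :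
    (∫⁻ a, kernelPow ν F (m + 1) a a ∂ν) ^ 2 ≤ (∫⁻ a, ∫⁻ b, F a b ^ 2 ∂ν ∂ν) ^ (m + 2) := by
  have hKm := measurable_kernelPow (ν := ν) hF m
  calc (∫⁻ a, kernelPow ν F (m + 1) a a ∂ν) ^ 2
      = (∫⁻ p : α × α, F p.1 p.2 * kernelPow ν F m p.2 p.1 ∂ν.prod ν) ^ 2 := by
        rw [lintegral_prod _ (by fun_prop)]; rfl
    _ ≤ (∫⁻ p : α × α, F p.1 p.2 ^ 2 ∂ν.prod ν) *
          ∫⁻ p : α × α, kernelPow ν F m p.2 p.1 ^ 2 ∂ν.prod ν :=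
        lintegral_mul_sq_le _ (by fun_prop) (by fun_prop)
    _ = (∫⁻ a, ∫⁻ b, F a b ^ 2 ∂ν ∂ν) * ∫⁻ a, ∫⁻ b, kernelPow ν F m a b ^ 2 ∂ν ∂ν := by
        have hswap := lintegral_prod_swap (μ := ν) (ν := ν) fun p => kernelPow ν F m p.1 p.2 ^ 2
        simp only [Prod.fst_swap, Prod.snd_swap] at hswap
        rw [hswap, lintegral_prod _ (by fun_prop), lintegral_prod _ (by fun_prop)]
    _ ≤ (∫⁻ a, ∫⁻ b, F a b ^ 2 ∂ν ∂ν) * (∫⁻ a, ∫⁻ b, F a b ^ 2 ∂ν ∂ν) ^ (m + 1) := by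
        gcongr; exact lintegral_lintegral_kernelPow_sq_le hF m
    _ = (∫⁻ a, ∫⁻ b, F a b ^ 2 ∂ν ∂ν) ^ (m + 2) := (pow_succ' _ _).symm

theorem lintegral_kernelPow_diag_le (hF : Measurable (uncurry F)) (m : ℕ) :
    ∫⁻ a, kernelPow ν F m a a ∂ν ≤ (∫⁻ a, F a a ∂ν + hsNorm ν F) ^ (m + 1) := by
  cases m with
  | zero => rw [zero_add, pow_one]; exact le_self_add
  | succ m =>
    calc ∫⁻ a, kernelPow ν F (m + 1) a a ∂ν ≤ hsNorm ν F ^ (m + 2) := by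
          rw [← ENNReal.pow_le_pow_left_iff two_ne_zero, ← pow_mul, mul_comm, pow_mul, hsNorm_sq]
          exact lintegral_kernelPow_succ_diag_sq_le hF m
      _ ≤ (∫⁻ a, F a a ∂ν + hsNorm ν F) ^ (m + 1 + 1) := by gcongr; exact le_add_self

variable (ν F) in
noncomputable def permKernelProd {ι : Type*} [Fintype ι] (σ : Perm ι) (w : ι → ℕ) (t : ι → α) :
    ℝ≥0∞ :=
  ∏ i, kernelPow ν F (w i) (t i) (t (σ i))

theorem measurable_permKernelProd (hF : Measurable (uncurry F)) {ι : Type*} [Fintype ι]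
    (σ : Perm ι) (w : ι → ℕ) : Measurable (permKernelProd ν F σ w) := by
  have := measurable_kernelPow (ν := ν) hF
  unfold permKernelProd
  fun_prop

-- `decomposeFin.symm (p, τ)` sends `0 ↦ p` and `j.succ ↦ (τ j).succ`, except that the preimage of
-- `0` goes to `0` rather than to `p`: `τ` is the permutation with `0` cut out of its cycle.
theorem lintegral_permKernelProd_cons_of_fixed (hF : Measurable (uncurry F)) {n : ℕ}
    (τ : Perm (Fin n)) (w : Fin (n + 1) → ℕ) (u : Fin n → α) :
    ∫⁻ a, permKernelProd ν F (decomposeFin.symm (0, τ)) w (Fin.cons a u) ∂ν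
      = (∫⁻ a, kernelPow ν F (w 0) a a ∂ν) * permKernelProd ν F τ (fun j => w j.succ) u := by
  simp only [permKernelProd, Fin.prod_univ_succ, decomposeFin_symm_apply_zero,
    decomposeFin_symm_apply_succ, swap_self, refl_apply, Fin.cons_zero, Fin.cons_succ]
  exact lintegral_mul_const _
    ((measurable_kernelPow hF _).comp (measurable_id.prodMk measurable_id))

theorem lintegral_permKernelProd_cons_of_ne (hF : Measurable (uncurry F)) {n : ℕ}
    (p : Fin n) (τ : Perm (Fin n)) (w : Fin (n + 1) → ℕ) (u : Fin n → α) :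
    ∫⁻ a, permKernelProd ν F (decomposeFin.symm (p.succ, τ)) w (Fin.cons a u) ∂ν
      = permKernelProd ν F τ
          (update (fun j => w j.succ) (τ.symm p) (w (τ.symm p).succ + w 0 + 1)) u := by
  set q := τ.symm p
  set g : Fin n → ℝ≥0∞ := fun j => kernelPow ν F (w j.succ) (u j) (u (τ j))
  have hq : τ q = p := τ.apply_symm_apply p
  have hcons : ∀ a j, kernelPow ν F (w j.succ) (u j)
      ((Fin.cons a u : Fin (n + 1) → α) (swap 0 p.succ (τ j).succ))
      = update g q (kernelPow ν F (w q.succ) (u q) a) j := by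
    intro a j
    rcases eq_or_ne j q with rfl | hj
    · simp [hq]
    · have : τ j ≠ p := fun h => hj (τ.injective (h.trans hq.symm))
      simp [hj, g, swap_apply_of_ne_of_ne (Fin.succ_ne_zero _) (Fin.succ_injective _ |>.ne this)]
  have hupd : ∀ j, kernelPow ν F (update (fun j => w j.succ) q (w q.succ + w 0 + 1) j)
      (u j) (u (τ j)) = update g q (kernelPow ν F (w q.succ + w 0 + 1) (u q) (u p)) j := by
    intro j
    rcases eq_or_ne j q with rfl | hj
    · simp [hq]
    · simp [hj, g]
  calc _ = ∫⁻ a, kernelPow ν F (w 0) a (u p) *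
          (kernelPow ν F (w q.succ) (u q) a * ∏ j ∈ Finset.univ \ {q}, g j) ∂ν := by
        simp only [permKernelProd, Fin.prod_univ_succ, decomposeFin_symm_apply_zero,
          decomposeFin_symm_apply_succ, Fin.cons_zero, Fin.cons_succ, hcons,
          Finset.prod_update_of_mem (Finset.mem_univ q)]
    _ = (∫⁻ a, kernelPow ν F (w q.succ) (u q) a * kernelPow ν F (w 0) a (u p) ∂ν) *
          ∏ j ∈ Finset.univ \ {q}, g j := by
        have hmeas : Measurable fun a =>
            kernelPow ν F (w q.succ) (u q) a * kernelPow ν F (w 0) a (u p) :=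
          (measurable_kernelPow hF _).of_uncurry_left.mul
            (measurable_kernelPow hF _).of_uncurry_right
        rw [← lintegral_mul_const _ hmeas]
        exact lintegral_congr fun a => by ring
    _ = _ := by
        rw [lintegral_kernelPow_mul_kernelPow hF, permKernelProd,
          Finset.prod_congr rfl fun j _ => hupd j, Finset.prod_update_of_mem (Finset.mem_univ q)]

end SFinite

theorem sum_update_succ_add_one {n : ℕ} (w : Fin (n + 1) → ℕ) (q : Fin n) :
    ∑ j, (update (fun j => w j.succ) q (w q.succ + w 0 + 1) j + 1) = ∑ i, (w i + 1) := by
  rw [Fin.sum_univ_succ, Finset.sum_add_distrib, Finset.sum_add_distrib,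
    Finset.sum_update_of_mem (Finset.mem_univ q),
    Finset.sum_eq_add_sum_sdiff_singleton_of_mem (Finset.mem_univ q) (fun j => w j.succ)]
  ring

theorem lintegral_permKernelProd_le [SigmaFinite ν] (hF : Measurable (uncurry F)) {n : ℕ}
    (σ : Perm (Fin n)) (w : Fin n → ℕ) :
    ∫⁻ t, permKernelProd ν F σ w t ∂Measure.pi (fun _ => ν)
      ≤ (∫⁻ a, F a a ∂ν + hsNorm ν F) ^ ∑ i, (w i + 1) := by
  induction n with
  | zero => simp [permKernelProd]
  | succ n ih =>
    obtain ⟨⟨p, τ⟩, rfl⟩ := decomposeFin.symm.surjective σ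
    rw [lintegral_pi_fin_succ (measurable_permKernelProd hF _ _)]
    induction p using Fin.cases with
    | zero =>
      simp_rw [lintegral_permKernelProd_cons_of_fixed hF]
      rw [lintegral_const_mul _ (measurable_permKernelProd hF _ _), Fin.sum_univ_succ, pow_add]
      exact mul_le_mul' (lintegral_kernelPow_diag_le hF _) (ih τ _)
    | succ p =>
      simp_rw [lintegral_permKernelProd_cons_of_ne hF]
      rw [← sum_update_succ_add_one w (τ.symm p)]
      exact ih τ _

theorem lintegral_prod_perm_le [SigmaFinite ν] (hF : Measurable (uncurry F)) {n : ℕ}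
    (σ : Perm (Fin n)) :
    ∫⁻ t, ∏ i, F (t i) (t (σ i)) ∂Measure.pi (fun _ => ν)
      ≤ (∫⁻ a, F a a ∂ν + hsNorm ν F) ^ n := by
  simpa [permKernelProd, kernelPow] using lintegral_permKernelProd_le hF σ 0

end DetIntegralBound

open DetIntegralBound

theorem det_integral_bound_general (G : Set ℝ)
    (k : ℝ → ℝ → ℝ) (hk : Measurable (Function.uncurry k))
    (hk2 : IntegrableOn (fun p : ℝ × ℝ => (k p.1 p.2) ^ 2) (G ×ˢ G))
    (hkd : IntegrableOn (fun s => |k s s|) G) (n : ℕ) :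
    (∫ t in Set.univ.pi (fun _ : Fin n => G),
        |Matrix.det (Matrix.of fun i j : Fin n => k (t i) (t j))| ∂volume) ≤
      (Nat.factorial n) *
        ((∫ s in G, |k s s|) +
          Real.sqrt (∫ p in G ×ˢ G, (k p.1 p.2) ^ 2)) ^ n := by
  set ν := volume.restrict G
  set F : ℝ → ℝ → ℝ≥0∞ := fun s t => ENNReal.ofReal |k s t|
  have hF : Measurable (uncurry F) := by fun_prop
  have hdet : Measurable fun t : Fin n → ℝ => |(Matrix.of fun i j => k (t i) (t j)).det| := by
    simp only [Matrix.det_apply, Units.smul_def, zsmul_eq_mul]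
    fun_prop
  have hD : ∫⁻ a, F a a ∂ν = ENNReal.ofReal (∫ s in G, |k s s|) :=
    (ofReal_integral_eq_lintegral_ofReal hkd (ae_of_all _ fun _ => abs_nonneg _)).symm
  have hH : hsNorm ν F = ENNReal.ofReal √(∫ p in G ×ˢ G, k p.1 p.2 ^ 2) := by
    rw [IntegrableOn, Measure.volume_eq_prod, ← Measure.prod_restrict] at hk2
    rw [Measure.volume_eq_prod, ← Measure.prod_restrict]
    exact hsNorm_ofReal_abs hk hk2
  rw [integral_eq_lintegral_of_nonneg_ae (ae_of_all _ fun _ => abs_nonneg _)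
    hdet.aestronglyMeasurable, volume_pi, Measure.restrict_pi_pi]
  refine ENNReal.toReal_le_of_le_ofReal (by positivity) ?_
  calc ∫⁻ t, ENNReal.ofReal |(Matrix.of fun i j => k (t i) (t j)).det| ∂Measure.pi (fun _ => ν)
      ≤ ∫⁻ t, ∑ σ : Equiv.Perm (Fin n), ∏ i, F (t i) (t (σ i)) ∂Measure.pi (fun _ => ν) :=
        lintegral_mono fun t => Matrix.ofReal_abs_det_le_sum_prod _
    _ = ∑ σ : Equiv.Perm (Fin n), ∫⁻ t, ∏ i, F (t i) (t (σ i)) ∂Measure.pi (fun _ => ν) :=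
        lintegral_finsetSum _ fun σ _ => by fun_prop
    _ ≤ ∑ _σ : Equiv.Perm (Fin n), (∫⁻ a, F a a ∂ν + hsNorm ν F) ^ n :=
        Finset.sum_le_sum fun σ _ => lintegral_prod_perm_le hF σ
    _ = _ := by
        rw [Finset.sum_const, Finset.card_univ, Fintype.card_perm, Fintype.card_fin, nsmul_eq_mul,
          hD, hH, ← ENNReal.ofReal_add (by positivity) (by positivity),
          ← ENNReal.ofReal_pow (by positivity), ENNReal.ofReal_mul (by positivity),
          ENNReal.ofReal_natCast]

/-- For a square-integrable kernel `k` on a bounded interval `G` with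
integrable diagonal, the integral of the absolute value of the `n × n` determinant
`det [k(tᵢ,tⱼ)]` over `Gⁿ` is bounded by `n! (∫_G |k(s,s)| ds + ‖A‖_HS)ⁿ`, where the
Hilbert–Schmidt norm of the integral operator `A` with kernel `k` is the `L²` norm of
the kernel. -/
theorem det_integral_bound (G : Set ℝ) (hG : Bornology.IsBounded G)
    (hGi : G.OrdConnected) (hGm : MeasurableSet G)
    (k : ℝ → ℝ → ℝ) (hk : Measurable (Function.uncurry k))
    (hk2 : IntegrableOn (fun p : ℝ × ℝ => (k p.1 p.2) ^ 2) (G ×ˢ G))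
    (hkd : IntegrableOn (fun s => |k s s|) G) (n : ℕ) (hn : 1 ≤ n) :
    (∫ t in Set.univ.pi (fun _ : Fin n => G),
        |Matrix.det (Matrix.of fun i j : Fin n => k (t i) (t j))| ∂volume) ≤
      (Nat.factorial n) *
        ((∫ s in G, |k s s|) +
          Real.sqrt (∫ p in G ×ˢ G, (k p.1 p.2) ^ 2)) ^ n :=
  det_integral_bound_general G k hk hk2 hkd n
end

section
/- Let $R: (0,\sigma] \to \mathbb{R}^{2\times 2}$ take symmetric positive definite values with $\det R \equiv 1/4$, and suppose $H_1, H_2: (0,\sigma] \to \mathbb{C}^2$ are continuously differentiable solutions of $J H'(t) = z R(t) H(t)$ (with $J = \begin{pmatrix} 0 & -1 \\ 1 & 0 \end{pmatrix}$, $z \in \mathbb{C}$ fixed) satisfying $\lim_{t\to 0} H_1(t) = \lim_{t \to 0} H_2(t) = \mathfrak{u}_0$ for a fixed nonzero $\mathfrak{u}_0 \in \mathbb{R}^2$, and neither $H_1$ nor $H_2$ vanishes anywhere on $(0,\sigma]$. Then $H_1 = H_2$ on $(0,\sigma]$. -/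
open Set Filter Topology Matrix

/-!
Along two solutions of `J H' = z R H` with `J` skew and `R` symmetric, the bilinear pairing
`H₂ᵀ J H₁` has zero derivative, and at `0⁺` it tends to `u₀ᵀ J u₀ = 0`. So `H₂(t)` is parallel
to `H₁(t) ≠ 0`, say `H₂ = c H₁`; since `J` is invertible the equations force `H₂' = c H₁'`, so
`c = ⟨H₁, H₂⟩ / ⟨H₁, H₁⟩` has zero derivative, and it tends to `1` at `0⁺`.
-/

section Derivatives

variable {n : Type*} [Fintype n] {𝕜 𝔸 : Type*} [NontriviallyNormedField 𝕜] [NormedCommRing 𝔸]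
  [NormedAlgebra 𝕜 𝔸] {u v : 𝕜 → n → 𝔸} {u' v' : n → 𝔸} {t : 𝕜}

theorem HasDerivAt.dotProduct (hu : HasDerivAt u u' t) (hv : HasDerivAt v v' t) :
    HasDerivAt (fun s => u s ⬝ᵥ v s) (u' ⬝ᵥ v t + u t ⬝ᵥ v') t := by
  have := HasDerivAt.fun_sum (u := Finset.univ) fun i _ =>
    (hasDerivAt_pi.1 hu i).fun_mul (hasDerivAt_pi.1 hv i)
  rwa [Finset.sum_add_distrib] at this

theorem HasDerivAt.const_mulVec (A : Matrix n n 𝔸) (hv : HasDerivAt v v' t) :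
    HasDerivAt (fun s => A *ᵥ v s) (A *ᵥ v') t :=
  hasDerivAt_pi.2 fun i => by
    simpa only [mulVec, zero_dotProduct, zero_add] using (hasDerivAt_const t (A i)).dotProduct hv

theorem hasDerivAt_dotProduct_mulVec_eq_zero {J S : Matrix n n 𝔸} (hJ : Jᵀ = -J) (hS : Sᵀ = S)
    (hu : HasDerivAt u u' t) (hv : HasDerivAt v v' t)
    (hu' : J *ᵥ u' = S *ᵥ u t) (hv' : J *ᵥ v' = S *ᵥ v t) :
    HasDerivAt (fun s => v s ⬝ᵥ J *ᵥ u s) 0 t := by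
  refine (hv.dotProduct (hu.const_mulVec J)).congr_deriv ?_
  calc v' ⬝ᵥ J *ᵥ u t + v t ⬝ᵥ J *ᵥ u'
      = -((J *ᵥ v') ⬝ᵥ u t) + v t ⬝ᵥ S *ᵥ u t := by
        rw [dotProduct_mulVec, ← mulVec_transpose, hJ, neg_mulVec, neg_dotProduct, hu']
    _ = 0 := by
        rw [hv', dotProduct_mulVec, ← mulVec_transpose, hS, dotProduct_comm, neg_add_cancel]

end Derivatives

theorem Filter.Tendsto.dotProduct {n α R : Type*} [Fintype n] [TopologicalSpace R]
    [NonUnitalNonAssocSemiring R] [IsTopologicalSemiring R] {l : Filter α} {u v : α → n → R}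
    {a b : n → R} (hu : Tendsto u l (𝓝 a)) (hv : Tendsto v l (𝓝 b)) :
    Tendsto (fun x => u x ⬝ᵥ v x) l (𝓝 (a ⬝ᵥ b)) :=
  ((continuous_fst.dotProduct continuous_snd).tendsto (a, b)).comp (hu.prodMk_nhds hv)

theorem eqOn_Ioc_of_hasDerivAt_zero_of_tendsto {E : Type*} [NormedAddCommGroup E]
    [NormedSpace ℝ E] {f : ℝ → E} {a b : ℝ} {L : E}
    (hf : ∀ t ∈ Ioc a b, HasDerivAt f 0 t) (hL : Tendsto f (𝓝[>] a) (𝓝 L)) :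
    EqOn f (fun _ => L) (Ioc a b) := by
  intro t ht
  have hconst : ∀ s ∈ Ioc a b, f s = f t := fun s hs => by
    simpa [sub_eq_zero] using (convex_Ioc a b).norm_image_sub_le_of_norm_hasDerivWithin_le
      (fun x hx => (hf x hx).hasDerivWithinAt) (fun _ _ => norm_zero.le) ht hs
  refine tendsto_nhds_unique (tendsto_const_nhds.congr' ?_) hL
  filter_upwards [Ioc_mem_nhdsGT (ht.1.trans_le ht.2)] with s hs using (hconst s hs).symm

theorem dotProduct_standardJ_mulVec {R : Type*} [CommRing R] (v w : Fin 2 → R) :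
    v ⬝ᵥ !![0, -1; 1, 0] *ᵥ w = v 1 * w 0 - v 0 * w 1 := by
  simp only [dotProduct, mulVec, of_apply, cons_val', cons_val_fin_one, Fin.sum_univ_two,
    cons_val_zero, cons_val_one]
  ring

theorem eq_smul_of_dotProduct_standardJ_mulVec_eq_zero {K : Type*} [Field K] [PartialOrder K]
    [StarRing K] [StarOrderedRing K] {v w : Fin 2 → K} (hw : w ≠ 0)
    (h : v ⬝ᵥ !![0, -1; 1, 0] *ᵥ w = 0) :
    v = (star w ⬝ᵥ v / (star w ⬝ᵥ w)) • w := by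
  have hww : star w ⬝ᵥ w ≠ 0 := dotProduct_star_self_eq_zero.not.2 hw
  rw [dotProduct_standardJ_mulVec] at h
  refine funext (Fin.forall_fin_two.2 ⟨?_, ?_⟩) <;>
  rw [Pi.smul_apply, smul_eq_mul, div_mul_eq_mul_div, eq_div_iff hww] <;>
  simp only [dotProduct, Fin.sum_univ_two, Pi.star_apply]
  · linear_combination -star (w 1) * h
  · linear_combination star (w 0) * h

open scoped ComplexOrder

theorem hasDerivAt_dotProduct_div_eq_zero_of_eq_smul {n : Type*} [Fintype n]
    {H K : ℝ → n → ℂ} {H' K' : n → ℂ} {t : ℝ} {c : ℂ}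
    (hH : HasDerivAt H H' t) (hK : HasDerivAt K K' t) (hH0 : H t ≠ 0)
    (hKt : K t = c • H t) (hK' : K' = c • H') :
    HasDerivAt (fun s => star (H s) ⬝ᵥ K s / (star (H s) ⬝ᵥ H s)) 0 t := by
  have hHH : star (H t) ⬝ᵥ H t ≠ 0 := dotProduct_star_self_eq_zero.not.2 hH0
  refine ((hH.star.dotProduct hK).div (hH.star.dotProduct hH) hHH).congr_deriv ?_
  simp only [hKt, hK', dotProduct_smul, smul_eq_mul]
  ring

theorem canonical_system_unique_general (σ : ℝ) (z : ℂ)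
    (R : ℝ → Matrix (Fin 2) (Fin 2) ℝ)
    (hRsymm : ∀ t ∈ Ioc 0 σ, (R t).IsSymm)
    (J : Matrix (Fin 2) (Fin 2) ℝ) (hJ : J = !![0, -1; 1, 0])
    (u₀ : Fin 2 → ℝ) (hu₀ : u₀ ≠ 0)
    (H₁ H₂ H₁' H₂' : ℝ → Fin 2 → ℂ)
    (hd₁ : ∀ t ∈ Ioc 0 σ, HasDerivAt H₁ (H₁' t) t)
    (hd₂ : ∀ t ∈ Ioc 0 σ, HasDerivAt H₂ (H₂' t) t)
    (hODE₁ : ∀ t ∈ Ioc 0 σ,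
      (J.map Complex.ofReal).mulVec (H₁' t) =
        z • ((R t).map Complex.ofReal).mulVec (H₁ t))
    (hODE₂ : ∀ t ∈ Ioc 0 σ,
      (J.map Complex.ofReal).mulVec (H₂' t) =
        z • ((R t).map Complex.ofReal).mulVec (H₂ t))
    (hlim₁ : Tendsto H₁ (nhdsWithin 0 (Ioi 0)) (nhds fun i => (u₀ i : ℂ)))
    (hlim₂ : Tendsto H₂ (nhdsWithin 0 (Ioi 0)) (nhds fun i => (u₀ i : ℂ)))
    (hne₁ : ∀ t ∈ Ioc 0 σ, H₁ t ≠ 0) :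
    Set.EqOn H₁ H₂ (Ioc 0 σ) := by
  set u : Fin 2 → ℂ := fun i => (u₀ i : ℂ)
  have hJc : J.map Complex.ofReal = !![0, -1; 1, 0] := by
    subst hJ; ext i j; fin_cases i <;> fin_cases j <;> simp
  have hJskew : (!![0, -1; 1, 0] : Matrix (Fin 2) (Fin 2) ℂ)ᵀ = -!![0, -1; 1, 0] := by
    ext i j; fin_cases i <;> fin_cases j <;> simp
  have hJinj : Function.Injective (!![0, -1; 1, 0] : Matrix (Fin 2) (Fin 2) ℂ).mulVec :=
    mulVec_injective_iff_isUnit.2 (by simp [isUnit_iff_isUnit_det, det_fin_two])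
  have hS : ∀ t ∈ Ioc 0 σ, (z • (R t).map Complex.ofReal)ᵀ = z • (R t).map Complex.ofReal :=
    fun t ht => by simp only [transpose_smul, ← transpose_map, (hRsymm t ht).eq]
  simp only [hJc, ← smul_mulVec] at hODE₁ hODE₂
  have hW : EqOn (fun s => H₂ s ⬝ᵥ !![0, -1; 1, 0] *ᵥ H₁ s) (fun _ => u ⬝ᵥ !![0, -1; 1, 0] *ᵥ u)
      (Ioc 0 σ) :=
    eqOn_Ioc_of_hasDerivAt_zero_of_tendsto (fun t ht => hasDerivAt_dotProduct_mulVec_eq_zero hJskew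
      (hS t ht) (hd₁ t ht) (hd₂ t ht) (hODE₁ t ht) (hODE₂ t ht))
      (hlim₂.dotProduct (((continuous_const.matrix_mulVec continuous_id).tendsto u).comp hlim₁))
  set c : ℝ → ℂ := fun s => star (H₁ s) ⬝ᵥ H₂ s / (star (H₁ s) ⬝ᵥ H₁ s)
  have hpar : ∀ t ∈ Ioc 0 σ, H₂ t = c t • H₁ t := fun t ht =>
    eq_smul_of_dotProduct_standardJ_mulVec_eq_zero (hne₁ t ht)
      ((hW ht).trans (by rw [dotProduct_standardJ_mulVec, mul_comm, sub_self]))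
  have hpar' : ∀ t ∈ Ioc 0 σ, H₂' t = c t • H₁' t := fun t ht => hJinj <| by
    rw [hODE₂ t ht, hpar t ht, mulVec_smul, mulVec_smul, hODE₁ t ht]
  have hu : star u ⬝ᵥ u ≠ 0 := dotProduct_star_self_eq_zero.not.2 fun h => hu₀ <| funext fun i => by
    simpa [u] using congrFun h i
  have hc : EqOn c (fun _ => star u ⬝ᵥ u / (star u ⬝ᵥ u)) (Ioc 0 σ) :=
    eqOn_Ioc_of_hasDerivAt_zero_of_tendsto (fun t ht => hasDerivAt_dotProduct_div_eq_zero_of_eq_smul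
      (hd₁ t ht) (hd₂ t ht) (hne₁ t ht) (hpar t ht) (hpar' t ht))
      ((hlim₁.star.dotProduct hlim₂).div (hlim₁.star.dotProduct hlim₁) hu)
  intro t ht
  rw [hpar t ht, hc ht, div_self hu, one_smul]

/-- Uniqueness of solutions of the canonical system `J H' = z R H` on
`(0, σ]` with boundary value `u₀` at `0⁺`: two nonvanishing continuously
differentiable solutions with the same boundary behavior coincide. -/
theorem canonical_system_unique (σ : ℝ) (hσ : 0 < σ) (z : ℂ)
    (R : ℝ → Matrix (Fin 2) (Fin 2) ℝ)
    (hRsymm : ∀ t ∈ Ioc 0 σ, (R t).IsSymm)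
    (hRpos : ∀ t ∈ Ioc 0 σ, (R t).PosDef)
    (hRdet : ∀ t ∈ Ioc 0 σ, (R t).det = 1 / 4)
    (J : Matrix (Fin 2) (Fin 2) ℝ) (hJ : J = !![0, -1; 1, 0])
    (u₀ : Fin 2 → ℝ) (hu₀ : u₀ ≠ 0)
    (H₁ H₂ H₁' H₂' : ℝ → Fin 2 → ℂ)
    (hd₁ : ∀ t ∈ Ioc 0 σ, HasDerivAt H₁ (H₁' t) t)
    (hd₂ : ∀ t ∈ Ioc 0 σ, HasDerivAt H₂ (H₂' t) t)
    (hc₁ : ContinuousOn H₁' (Ioc 0 σ)) (hc₂ : ContinuousOn H₂' (Ioc 0 σ))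
    (hODE₁ : ∀ t ∈ Ioc 0 σ,
      (J.map Complex.ofReal).mulVec (H₁' t) =
        z • ((R t).map Complex.ofReal).mulVec (H₁ t))
    (hODE₂ : ∀ t ∈ Ioc 0 σ,
      (J.map Complex.ofReal).mulVec (H₂' t) =
        z • ((R t).map Complex.ofReal).mulVec (H₂ t))
    (hlim₁ : Tendsto H₁ (nhdsWithin 0 (Ioi 0)) (nhds fun i => (u₀ i : ℂ)))
    (hlim₂ : Tendsto H₂ (nhdsWithin 0 (Ioi 0)) (nhds fun i => (u₀ i : ℂ)))
    (hne₁ : ∀ t ∈ Ioc 0 σ, H₁ t ≠ 0)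
    (hne₂ : ∀ t ∈ Ioc 0 σ, H₂ t ≠ 0) :
    Set.EqOn H₁ H₂ (Ioc 0 σ) :=
  canonical_system_unique_general σ z R hRsymm J hJ u₀ hu₀ H₁ H₂ H₁' H₂' hd₁ hd₂ hODE₁ hODE₂ hlim₁
    hlim₂ hne₁
end
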